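/- arXiv:2401.14916 — 2 statements merged into one kernel-verified Lean document; each statement's English description precedes it below -/
import Mathlib

section
/- Let f₁, …, f_m : ℝ^n → ℝ be nonzero linear functionals and let k ∈ {1,…,m}. Then f_k(x) = 0 for every x ∈ ℝ^n satisfying fᵢ(x) ≥ 0 for all i ∈ {1,…,m} (i.e., f_k = 0 is an implied equality of the inequality system {fᵢ(x) ≥ 0 : i = 1,…,m}) if and only if there exist reals pᵢ ≤ 0 for i ∈ {1,…,m}∖{k} such that f_k = Σ_{i≠k} pᵢ fᵢ. -/
/-!
For "only if": `-f_k` is nonnegative on the cone `{x | ∀ i, 0 ≤ fᵢ x}`, so by Farkas' lemma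
`-f_k = ∑ cᵢ fᵢ` with `cᵢ ≥ 0`; solving for `f_k` gives `pᵢ = -cᵢ / (1 + c_k)`.
Farkas' lemma itself is proved by induction on the number of constraints (Fourier–Motzkin):
if dropping the constraint `f_a ≥ 0` breaks the implication at some `y`, then `f_a y < 0`, and
composing everything with the projection onto `ker f_a` along `y` removes `f_a`.
-/

open Finset Function

section Farkas

variable {𝕜 V ι : Type*} [Field 𝕜] [AddCommGroup V] [Module 𝕜 V]

/-- For `φ y ≠ 0`, the projection onto `ker φ` along `y`. -/
def projKer (φ : V →ₗ[𝕜] 𝕜) (y : V) : V →ₗ[𝕜] V :=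
  LinearMap.id - (φ y)⁻¹ • φ.smulRight y

lemma projKer_apply (φ : V →ₗ[𝕜] 𝕜) (y x : V) :
    projKer φ y x = x - (φ x / φ y) • y := by
  simp [projKer, smul_smul, div_eq_inv_mul]

lemma apply_projKer {φ : V →ₗ[𝕜] 𝕜} {y : V} (hy : φ y ≠ 0) (x : V) :
    φ (projKer φ y x) = 0 := by
  simp [projKer_apply, hy]

lemma eq_add_smul_of_comp_projKer_eq (φ : V →ₗ[𝕜] 𝕜) (y : V) {g G : V →ₗ[𝕜] 𝕜}
    (h : g ∘ₗ projKer φ y = G ∘ₗ projKer φ y) :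
    g = G + ((g y - G y) / φ y) • φ := by
  ext x
  have hx := LinearMap.congr_fun h x
  simp only [LinearMap.comp_apply, projKer_apply, map_sub, map_smul, smul_eq_mul] at hx
  simp only [LinearMap.add_apply, LinearMap.smul_apply, smul_eq_mul]
  linear_combination hx

lemma sum_insert_update_smul {M : Type*} [AddCommMonoid M] [Module 𝕜 M] [DecidableEq ι]
    {a : ι} {s : Finset ι} (ha : a ∉ s) (c : ι → 𝕜) (t : 𝕜) (f : ι → M) :
    ∑ i ∈ insert a s, update c a t i • f i = t • f a + ∑ i ∈ s, c i • f i := by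
  rw [sum_insert ha, update_self]
  congr 1
  exact sum_congr rfl fun i hi ↦ by rw [update_of_ne (ne_of_mem_of_not_mem hi ha)]

variable [LinearOrder 𝕜] [IsStrictOrderedRing 𝕜]

theorem farkas (f : ι → V →ₗ[𝕜] 𝕜) (s : Finset ι) (g : V →ₗ[𝕜] 𝕜)
    (hg : ∀ x, (∀ i ∈ s, 0 ≤ f i x) → 0 ≤ g x) :
    ∃ c : ι → 𝕜, (∀ i, 0 ≤ c i) ∧ g = ∑ i ∈ s, c i • f i := by
  classical
  induction s using Finset.induction_on generalizing f g with
  | empty =>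
    refine ⟨0, fun _ ↦ le_rfl, ?_⟩
    ext x
    simpa using le_antisymm (by simpa using hg (-x) (by simp)) (hg x (by simp))
  | insert a s ha ih =>
    by_cases hs : ∀ x, (∀ i ∈ s, 0 ≤ f i x) → 0 ≤ g x
    · obtain ⟨c, hc, rfl⟩ := ih f g hs
      refine ⟨update c a 0, fun i ↦ ?_, by simp [sum_insert_update_smul ha]⟩
      rcases eq_or_ne i a with rfl | hi <;> simp [*]
    push Not at hs
    obtain ⟨y, hy, hgy⟩ := hs
    have hay : f a y < 0 := by
      by_contra! hay
      exact hgy.not_ge <| hg y <| forall_mem_insert _ _ _ |>.2 ⟨hay, hy⟩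
    set π := projKer (f a) y
    obtain ⟨c, hc, hgc⟩ := ih (fun i ↦ f i ∘ₗ π) (g ∘ₗ π) fun x hx ↦
      hg (π x) <| forall_mem_insert _ _ _ |>.2 ⟨(apply_projKer hay.ne x).ge, hx⟩
    set G := ∑ i ∈ s, c i • f i
    have hGy : 0 ≤ G y := by
      simpa [G] using sum_nonneg fun i hi ↦ mul_nonneg (hc i) (hy i hi)
    refine ⟨update c a ((g y - G y) / f a y), fun i ↦ ?_, ?_⟩
    · rcases eq_or_ne i a with rfl | hi
      · simpa using div_nonneg_of_nonpos (by linarith) hay.le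
      · simpa [hi] using hc i
    · rw [sum_insert_update_smul ha, add_comm]
      refine eq_add_smul_of_comp_projKer_eq _ _ <| LinearMap.ext fun x ↦ ?_
      simpa [G] using LinearMap.congr_fun hgc x

lemma exists_nonpos_eq_sum_erase {M : Type*} [AddCommGroup M] [Module 𝕜 M] [DecidableEq ι]
    {v : ι → M} {c : ι → 𝕜} (hc : ∀ i, 0 ≤ c i) {s : Finset ι} {k : ι} (hk : k ∈ s)
    (h : -v k = ∑ i ∈ s, c i • v i) :
    ∃ p : ι → 𝕜, (∀ i, i ≠ k → p i ≤ 0) ∧ v k = ∑ i ∈ s.erase k, p i • v i := by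
  have hck : 0 < 1 + c k := by linarith [hc k]
  refine ⟨fun i ↦ -((1 + c k)⁻¹ * c i), fun i _ ↦ ?_, ?_⟩
  · exact neg_nonpos.2 <| mul_nonneg (inv_nonneg.2 hck.le) (hc i)
  rw [← add_sum_erase _ _ hk] at h
  have hvk : (1 + c k) • v k = -∑ i ∈ s.erase k, c i • v i := by
    linear_combination (norm := module) -h
  calc v k = (1 + c k)⁻¹ • ((1 + c k) • v k) := (inv_smul_smul₀ hck.ne' _).symm
    _ = _ := by simp only [hvk, smul_neg, smul_sum, ← sum_neg_distrib, smul_smul, neg_smul]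

theorem implied_equality_iff_general (n m : ℕ) (f : Fin m → ((Fin n → ℝ) →ₗ[ℝ] ℝ))
    (k : Fin m) :
    (∀ x : Fin n → ℝ, (∀ i, 0 ≤ f i x) → f k x = 0) ↔
      ∃ p : Fin m → ℝ, (∀ i, i ≠ k → p i ≤ 0) ∧
        f k = ∑ i ∈ Finset.univ.erase k, p i • f i := by
  constructor
  · intro h
    obtain ⟨c, hc, hfk⟩ := farkas f univ (-f k) fun x hx ↦ by
      simp [h x fun i ↦ hx i (mem_univ i)]
    exact exists_nonpos_eq_sum_erase hc (mem_univ k) hfk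
  · rintro ⟨p, hp, hfk⟩ x hx
    refine le_antisymm ?_ (hx k)
    rw [hfk, LinearMap.sum_apply]
    exact sum_nonpos fun i hi ↦
      mul_nonpos_of_nonpos_of_nonneg (hp i (ne_of_mem_erase hi)) (hx i)

/-- Lemma III.1: `f_k = 0` is an implied equality of the inequality system
`{fᵢ(x) ≥ 0 : i = 1,…,m}` iff `f_k` is a linear combination of the other `fᵢ`'s
with nonpositive coefficients. -/
theorem implied_equality_iff (n m : ℕ) (f : Fin m → ((Fin n → ℝ) →ₗ[ℝ] ℝ))
    (hf : ∀ i, f i ≠ 0) (k : Fin m) :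
    (∀ x : Fin n → ℝ, (∀ i, 0 ≤ f i x) → f k x = 0) ↔
      ∃ p : Fin m → ℝ, (∀ i, i ≠ k → p i ≤ 0) ∧
        f k = ∑ i ∈ Finset.univ.erase k, p i • f i :=
  implied_equality_iff_general n m f k
end Farkas
end

section
/- Fix n ≥ 1 and consider real-valued set functions h on the subsets of {1,…,n} with h(∅) = 0 (h(A) plays the role of the joint entropy of the random variables indexed by A). Define the elemental functionals: for each i ∈ {1,…,n}, e_i(h) = h({1,…,n}) − h({1,…,n}∖{i}); and for each pair i ≠ j in {1,…,n} and each K ⊆ {1,…,n}∖{i,j}, e_{i,j,K}(h) = h({i}∪K) + h({j}∪K) − h({i,j}∪K) − h(K). Then for any nonempty subsets G, G' ⊆ {1,…,n} and any subset G'' ⊆ {1,…,n}, the functional μ_{G,G',G''}(h) = h(G∪G'') + h(G'∪G'') − h(G∪G'∪G'') − h(G'') (representing the conditional mutual information I(X_G; X_{G'} | X_{G''}) in terms of joint entropies) is a conic combination of the elemental functionals: there exist nonnegative reals c_i and c_{i,j,K} such that μ_{G,G',G''}(h) = Σ_i c_i e_i(h) + Σ_{i,j,K} c_{i,j,K} e_{i,j,K}(h)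 for all such h. -/
open Finset

/-!
By the chain rule `I(G ∪ {a}; G' | K) = I(G; G' | K) + I(a; G' | G ∪ K)` and symmetry, every
`I(G; G' | K)` is a sum of terms `I(a; b | K)` with single indices `a`, `b`. Such a term
vanishes if `a ∈ K` or `b ∈ K`, is elemental if `a ≠ b`, and for `a = b` it is the conditional
entropy `H(a | K)`, which splits as `I(a; b | K) + H(a | K ∪ {b})` for any `b ∉ K ∪ {a}`;
enlarging `K` this way ends at `H(a | univ \ {a}) = e_a`.
-/

section ConditionalMutualInformation

variable {α : Type*} [DecidableEq α]

/-- `I(X_G; X_{G'} | X_K)` in terms of the joint entropies `h`; `I(G; G | K) = H(G | K)`. -/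
def condMutualInfo (G G' K : Finset α) (h : Finset α → ℝ) : ℝ :=
  h (G ∪ K) + h (G' ∪ K) - h (G ∪ G' ∪ K) - h K

theorem condMutualInfo_comm (G G' K : Finset α) :
    condMutualInfo G G' K = condMutualInfo G' G K := by
  funext h
  simp only [condMutualInfo, union_comm G G']
  ring

theorem condMutualInfo_empty_left (G' K : Finset α) : condMutualInfo ∅ G' K = 0 := by
  funext h
  simp [condMutualInfo]

theorem condMutualInfo_singleton_of_mem {a : α} {K : Finset α} (ha : a ∈ K) (G' : Finset α) :
    condMutualInfo {a} G' K = 0 := by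
  funext h
  have haK : {a} ∪ K = K := union_eq_right.2 (singleton_subset_iff.2 ha)
  simp only [condMutualInfo, union_assoc, union_left_comm {a} G', haK, Pi.zero_apply]
  ring

theorem condMutualInfo_insert_left (a : α) (G G' K : Finset α) :
    condMutualInfo (insert a G) G' K = condMutualInfo G G' K + condMutualInfo {a} G' (G ∪ K) := by
  funext h
  simp only [condMutualInfo, Pi.add_apply, insert_eq, union_assoc, union_left_comm G' G]
  ring

theorem condMutualInfo_self_eq_add (G G' K : Finset α) :
    condMutualInfo G G K = condMutualInfo G G' K + condMutualInfo G G (G' ∪ K) := by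
  funext h
  simp only [condMutualInfo, Pi.add_apply, union_assoc, union_left_comm G G', union_left_idem]
  ring

end ConditionalMutualInformation

section ElementalCone

variable {α : Type*} [Fintype α] [DecidableEq α]

def elementalCombination (c : α → ℝ) (d : α → α → Finset α → ℝ) (h : Finset α → ℝ) :
    ℝ :=
  (∑ i, c i * (h univ - h (univ \ {i}))) +
  ∑ i, ∑ j ∈ univ.erase i, ∑ K ∈ (univ \ ({i, j} : Finset α)).powerset,
    d i j K * (h ({i} ∪ K) + h ({j} ∪ K) - h ({i, j} ∪ K) - h K)

variable (α) in
def elementalCone : AddSubmonoid ((Finset α → ℝ) → ℝ) where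
  carrier := {f | ∃ c d, (∀ i, 0 ≤ c i) ∧ (∀ i j K, 0 ≤ d i j K) ∧
    ∀ h, f h = elementalCombination c d h}
  zero_mem' :=
    ⟨0, 0, fun _ => le_rfl, fun _ _ _ => le_rfl, fun h => by simp [elementalCombination]⟩
  add_mem' := by
    rintro f g ⟨c, d, hc, hd, hf⟩ ⟨c', d', hc', hd', hg⟩
    refine ⟨c + c', d + d', fun i => add_nonneg (hc i) (hc' i),
      fun i j K => add_nonneg (hd i j K) (hd' i j K), fun h => ?_⟩
    simp only [Pi.add_apply, hf, hg, elementalCombination, add_mul, sum_add_distrib]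
    ring

theorem condMutualInfo_self_univ_sdiff_mem_elementalCone (i : α) :
    condMutualInfo {i} {i} (univ \ {i}) ∈ elementalCone α := by
  refine ⟨fun i' => if i' = i then 1 else 0, 0, fun _ => ite_nonneg zero_le_one le_rfl,
    fun _ _ _ => le_rfl, fun h => ?_⟩
  simp [elementalCombination, condMutualInfo]

theorem condMutualInfo_singleton_singleton_mem_elementalCone_of_ne {i j : α} (hij : i ≠ j)
    {K : Finset α} (hK : K ⊆ univ \ {i, j}) : condMutualInfo {i} {j} K ∈ elementalCone α := by
  refine ⟨0, fun i' j' K' => if i' = i ∧ j' = j ∧ K' = K then 1 else 0, fun _ => le_rfl,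
    fun _ _ _ => ite_nonneg zero_le_one le_rfl, fun h => ?_⟩
  simp only [elementalCombination, condMutualInfo, ← insert_eq, Pi.zero_apply, zero_mul,
    ite_and, ite_mul, one_mul, sum_ite_irrel, sum_const_zero, sum_ite_eq', mem_univ, mem_erase,
    mem_powerset, hij.symm, hK, ne_eq, not_false_eq_true, if_true, zero_add]

theorem condMutualInfo_self_mem_elementalCone (a : α) (K : Finset α) (ha : a ∉ K) :
    condMutualInfo {a} {a} K ∈ elementalCone α := by
  by_cases hK : {a} ∪ K = univ
  · have hK' : K = univ \ {a} := by
      rw [← hK, union_sdiff_left, sdiff_singleton_eq_erase, erase_eq_of_notMem ha]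
    exact hK' ▸ condMutualInfo_self_univ_sdiff_mem_elementalCone a
  · obtain ⟨b, hb⟩ : ∃ b, b ∉ {a} ∪ K := by simpa [eq_univ_iff_forall] using hK
    have hbK : b ∉ K := fun h => hb (mem_union_right _ h)
    have hab : a ≠ b := fun h => hb (mem_union_left _ (mem_singleton.2 h.symm))
    rw [condMutualInfo_self_eq_add {a} {b} K]
    refine add_mem (condMutualInfo_singleton_singleton_mem_elementalCone_of_ne hab ?_)
      (condMutualInfo_self_mem_elementalCone a ({b} ∪ K) ?_)
    · intro x hx
      simp only [mem_sdiff, mem_univ, mem_insert, mem_singleton, true_and]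
      rintro (rfl | rfl) <;> contradiction
    · simpa [hab] using ha
termination_by (univ \ K).card
decreasing_by
  exact card_lt_card <| Finset.ssubset_iff_subset_ne.2
    ⟨sdiff_subset_sdiff subset_rfl subset_union_right,
      fun h => by simpa [hbK] using congrArg (b ∈ ·) h⟩

theorem condMutualInfo_singleton_singleton_mem_elementalCone (a b : α) (K : Finset α) :
    condMutualInfo {a} {b} K ∈ elementalCone α := by
  by_cases haK : a ∈ K
  · rw [condMutualInfo_singleton_of_mem haK]
    exact zero_mem _
  by_cases hbK : b ∈ K
  · rw [condMutualInfo_comm, condMutualInfo_singleton_of_mem hbK]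
    exact zero_mem _
  obtain rfl | hab := eq_or_ne a b
  · exact condMutualInfo_self_mem_elementalCone a K haK
  refine condMutualInfo_singleton_singleton_mem_elementalCone_of_ne hab fun x hx => ?_
  simp only [mem_sdiff, mem_univ, mem_insert, mem_singleton, true_and]
  rintro (rfl | rfl) <;> contradiction

theorem condMutualInfo_singleton_left_mem_elementalCone (a : α) (G' K : Finset α) :
    condMutualInfo {a} G' K ∈ elementalCone α := by
  induction G' using Finset.induction_on generalizing K with
  | empty =>
    rw [condMutualInfo_comm, condMutualInfo_empty_left]
    exact zero_mem _
  | insert b G' _ ih =>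
    rw [condMutualInfo_comm, condMutualInfo_insert_left, condMutualInfo_comm G']
    exact add_mem (ih K) (condMutualInfo_singleton_singleton_mem_elementalCone _ _ _)

theorem condMutualInfo_mem_elementalCone (G G' K : Finset α) :
    condMutualInfo G G' K ∈ elementalCone α := by
  induction G using Finset.induction_on generalizing K with
  | empty =>
    rw [condMutualInfo_empty_left]
    exact zero_mem _
  | insert a G _ ih =>
    rw [condMutualInfo_insert_left]
    exact add_mem (ih K) (condMutualInfo_singleton_left_mem_elementalCone a G' (G ∪ K))

end ElementalCone

theorem mutual_information_conic_combination_general (n : ℕ)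
    (G G' G'' : Finset (Fin n)) :
    ∃ (c : Fin n → ℝ) (d : Fin n → Fin n → Finset (Fin n) → ℝ),
      (∀ i, 0 ≤ c i) ∧ (∀ i j K, 0 ≤ d i j K) ∧
      ∀ h : Finset (Fin n) → ℝ, h ∅ = 0 →
        h (G ∪ G'') + h (G' ∪ G'') - h (G ∪ G' ∪ G'') - h G'' =
          (∑ i, c i * (h Finset.univ - h (Finset.univ \ {i}))) +
          ∑ i, ∑ j ∈ Finset.univ.erase i,
            ∑ K ∈ (Finset.univ \ ({i, j} : Finset (Fin n))).powerset,
              d i j K * (h ({i} ∪ K) + h ({j} ∪ K) - h ({i, j} ∪ K) - h K) := by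
  obtain ⟨c, d, hc, hd, hcomb⟩ := condMutualInfo_mem_elementalCone G G' G''
  exact ⟨c, d, hc, hd, fun h _ => hcomb h⟩

/-- Theorem 1 (Yeung 1997): every conditional mutual information functional
`μ_{G,G',G''}(h) = h(G∪G'') + h(G'∪G'') − h(G∪G'∪G'') − h(G'')` on entropy-like set
functions is a conic combination of the elemental functionals
`e_i(h) = h({1,…,n}) − h({1,…,n}∖{i})` and
`e_{i,j,K}(h) = h({i}∪K) + h({j}∪K) − h({i,j}∪K) − h(K)` for `i ≠ j`,
`K ⊆ {1,…,n}∖{i,j}`. -/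
theorem mutual_information_conic_combination (n : ℕ) (hn : 1 ≤ n)
    (G G' G'' : Finset (Fin n)) (hG : G.Nonempty) (hG' : G'.Nonempty) :
    ∃ (c : Fin n → ℝ) (d : Fin n → Fin n → Finset (Fin n) → ℝ),
      (∀ i, 0 ≤ c i) ∧ (∀ i j K, 0 ≤ d i j K) ∧
      ∀ h : Finset (Fin n) → ℝ, h ∅ = 0 →
        h (G ∪ G'') + h (G' ∪ G'') - h (G ∪ G' ∪ G'') - h G'' =
          (∑ i, c i * (h Finset.univ - h (Finset.univ \ {i}))) +
          ∑ i, ∑ j ∈ Finset.univ.erase i,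
            ∑ K ∈ (Finset.univ \ ({i, j} : Finset (Fin n))).powerset,
              d i j K * (h ({i} ∪ K) + h ({j} ∪ K) - h ({i, j} ∪ K) - h K) :=
  mutual_information_conic_combination_general n G G' G''
end
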